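/- For 0 < γ < 1, the series Σ_{q=1}^∞ q^γ · (1/q) · ∏_{p | q} 1/(p+1) converges. -/

import Mathlib

/-!
The summand `f q = q ^ (γ - 1) ∏_{p ∣ q} 1 / (p + 1)` is a nonnegative multiplicative function
with `f (p ^ k) = p ^ (k (γ - 1)) / (p + 1)` for `k ≥ 1`. Summing the geometric series,
`∑_{k ≥ 1} f (p ^ k) = O(p ^ (γ - 2))`, which is summable over `p` because `γ - 2 < -1`.
The partial sums of `∑ f` are then bounded by the Euler products
`∏_{p < N} (1 + ∑_{k ≥ 1} f (p ^ k)) ≤ exp (∑_p ∑_{k ≥ 1} f (p ^ k))`.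
-/

open Real Finset

section EulerProduct

variable {f : ℕ → ℝ}

theorem sum_range_le_prod_primesBelow_tsum (hf : 0 ≤ f) (hf₀ : f 0 = 0) (hf₁ : f 1 = 1)
    (hmul : ∀ {m n : ℕ}, m.Coprime n → f (m * n) = f m * f n)
    (hsum : ∀ {p : ℕ}, p.Prime → Summable (fun k : ℕ => f (p ^ k))) (N : ℕ) :
    ∑ n ∈ range N, f n ≤ ∏ p ∈ N.primesBelow, ∑' k, f (p ^ k) := by
  have hnorm : ∀ {p : ℕ}, p.Prime → Summable (fun k : ℕ => ‖f (p ^ k)‖) := fun hp =>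
    (hsum hp).congr fun k => (Real.norm_of_nonneg (hf _)).symm
  have hsmooth := (hasSum_subtype_iff_indicator.mp
    (EulerProduct.summable_and_hasSum_smoothNumbers_prod_primesBelow_tsum hf₁ hmul hnorm N).2)
  have hrange : ∀ n ∈ range N, f n = N.smoothNumbers.indicator f n := by
    intro n hn
    rcases n.eq_zero_or_pos with rfl | hpos
    · rw [hf₀, Set.indicator_of_notMem fun h => Nat.ne_zero_of_mem_smoothNumbers h rfl]
    · exact (Set.indicator_of_mem (Nat.mem_smoothNumbers_of_lt hpos (mem_range.mp hn)) f).symm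
  rw [sum_congr rfl hrange]
  exact sum_le_hasSum _ (fun n _ => Set.indicator_nonneg (fun m _ => hf m) n) hsmooth

theorem summable_of_tsum_prime_pow_succ_le {g : ℕ → ℝ} (hf : 0 ≤ f) (hf₀ : f 0 = 0)
    (hf₁ : f 1 = 1) (hmul : ∀ {m n : ℕ}, m.Coprime n → f (m * n) = f m * f n)
    (hsum : ∀ {p : ℕ}, p.Prime → Summable (fun k : ℕ => f (p ^ k)))
    (hg : 0 ≤ g) (hg_sum : Summable g) (hfg : ∀ {p : ℕ}, p.Prime → ∑' k, f (p ^ (k + 1)) ≤ g p) :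
    Summable f := by
  refine summable_of_sum_range_le (c := exp (∑' p, g p)) hf fun N => ?_
  calc ∑ n ∈ range N, f n ≤ ∏ p ∈ N.primesBelow, ∑' k, f (p ^ k) :=
        sum_range_le_prod_primesBelow_tsum hf hf₀ hf₁ hmul hsum N
    _ ≤ ∏ p ∈ N.primesBelow, (1 + g p) := by
        refine prod_le_prod (fun p _ => tsum_nonneg fun k => hf _) fun p hp => ?_
        have hp := Nat.prime_of_mem_primesBelow hp
        rw [(hsum hp).tsum_eq_zero_add, pow_zero, hf₁]
        exact add_le_add_right (hfg hp) 1
    _ ≤ exp (∑ p ∈ N.primesBelow, g p) := prod_one_add_le_exp_sum _ hg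
    _ ≤ exp (∑' p, g p) := exp_le_exp.mpr (hg_sum.sum_le_tsum _ fun p _ => hg p)

end EulerProduct

noncomputable def seriesTerm (γ : ℝ) (q : ℕ) : ℝ :=
  (q : ℝ) ^ γ * (1 / (q : ℝ)) * ∏ p ∈ q.primeFactors, (1 : ℝ) / (p + 1)

section SeriesTerm

variable (γ : ℝ)

theorem seriesTerm_nonneg : 0 ≤ seriesTerm γ := fun q => by
  unfold seriesTerm
  exact mul_nonneg (by positivity) (prod_nonneg fun p _ => by positivity)

-- Holds for every `γ` because of the junk value `1 / 0 = 0`.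
theorem seriesTerm_zero : seriesTerm γ 0 = 0 := by
  simp [seriesTerm]

theorem seriesTerm_one : seriesTerm γ 1 = 1 := by
  simp [seriesTerm]

theorem seriesTerm_mul {m n : ℕ} (h : m.Coprime n) :
    seriesTerm γ (m * n) = seriesTerm γ m * seriesTerm γ n := by
  rcases eq_or_ne m 0 with rfl | hm
  · simp [seriesTerm_zero]
  rcases eq_or_ne n 0 with rfl | hn
  · simp [seriesTerm_zero]
  unfold seriesTerm
  rw [Nat.cast_mul, mul_rpow (by positivity) (by positivity), Nat.primeFactors_mul hm hn,
    prod_union h.disjoint_primeFactors]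
  field_simp

theorem seriesTerm_prime_pow_succ {p : ℕ} (hp : p.Prime) (k : ℕ) :
    seriesTerm γ (p ^ (k + 1)) = (p : ℝ) ^ (γ - 1) / (p + 1) * ((p : ℝ) ^ (γ - 1)) ^ k := by
  have hp0 : (0 : ℝ) < p := by exact_mod_cast hp.pos
  unfold seriesTerm
  have hpow : ((p : ℝ) ^ (k + 1)) ^ γ / (p : ℝ) ^ (k + 1) =
       (p : ℝ) ^ (γ - 1) * ((p : ℝ) ^ (γ - 1)) ^ k := by
    rw [← rpow_natCast, ← rpow_mul hp0.le, ← rpow_sub hp0, ← rpow_mul_natCast hp0.le,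
      ← rpow_add hp0]
    push_cast
    ring_nf
  rw [Nat.primeFactors_prime_pow k.succ_ne_zero hp, prod_singleton, Nat.cast_pow]
  linear_combination hpow / ((p : ℝ) + 1)

variable {γ} (hγ : γ < 1) {p : ℕ} (hp : p.Prime)
include hγ hp

theorem prime_rpow_sub_one_lt_one : (p : ℝ) ^ (γ - 1) < 1 :=
  rpow_lt_one_of_one_lt_of_neg (by exact_mod_cast hp.one_lt) (by linarith)

theorem hasSum_seriesTerm_prime_pow_succ :
    HasSum (fun k => seriesTerm γ (p ^ (k + 1)))
      ((p : ℝ) ^ (γ - 1) / (p + 1) * (1 - (p : ℝ) ^ (γ - 1))⁻¹) := by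
  simp only [seriesTerm_prime_pow_succ γ hp]
  exact (hasSum_geometric_of_lt_one (by positivity) (prime_rpow_sub_one_lt_one hγ hp)).mul_left _

theorem summable_seriesTerm_prime_pow : Summable (fun k => seriesTerm γ (p ^ k)) :=
  (summable_nat_add_iff 1).mp (hasSum_seriesTerm_prime_pow_succ hγ hp).summable

theorem tsum_seriesTerm_prime_pow_succ_le :
    ∑' k, seriesTerm γ (p ^ (k + 1)) ≤ (1 - 2 ^ (γ - 1))⁻¹ * (p : ℝ) ^ (γ - 2) := by
  have hp0 : (0 : ℝ) < p := by exact_mod_cast hp.pos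
  have hfactor : (p : ℝ) ^ (γ - 1) / (p + 1) ≤ (p : ℝ) ^ (γ - 2) := calc
    (p : ℝ) ^ (γ - 1) / (p + 1) ≤ (p : ℝ) ^ (γ - 1) / p := by gcongr; linarith
    _ = (p : ℝ) ^ (γ - 2) := by rw [← rpow_sub_one hp0.ne']; ring_nf
  have h2 : (2 : ℝ) ^ (γ - 1) < 1 := by exact_mod_cast prime_rpow_sub_one_lt_one hγ Nat.prime_two
  have hp2 : (p : ℝ) ^ (γ - 1) ≤ 2 ^ (γ - 1) :=
    rpow_le_rpow_of_nonpos two_pos (by exact_mod_cast hp.two_le) (by linarith)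
  have hgeom : (1 - (p : ℝ) ^ (γ - 1))⁻¹ ≤ (1 - 2 ^ (γ - 1))⁻¹ :=
    inv_anti₀ (by linarith) (by linarith)
  rw [(hasSum_seriesTerm_prime_pow_succ hγ hp).tsum_eq, mul_comm]
  exact mul_le_mul hgeom hfactor (by positivity) (inv_nonneg.mpr (by linarith))

end SeriesTerm

theorem stmt9 (γ : ℝ) (h1 : γ < 1) :
    Summable (fun q : ℕ =>
      (q : ℝ) ^ γ * (1 / (q : ℝ)) * ∏ p ∈ q.primeFactors, (1 : ℝ) / (p + 1)) := by
  have hC : 0 ≤ (1 - (2 : ℝ) ^ (γ - 1))⁻¹ := inv_nonneg.mpr <| sub_nonneg.mpr <| by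
    exact_mod_cast (prime_rpow_sub_one_lt_one h1 Nat.prime_two).le
  exact summable_of_tsum_prime_pow_succ_le (seriesTerm_nonneg γ) (seriesTerm_zero γ)
    (seriesTerm_one γ) (seriesTerm_mul γ) (summable_seriesTerm_prime_pow h1)
    (fun n => mul_nonneg hC (by positivity))
    ((summable_nat_rpow.mpr (by linarith)).mul_left _) (tsum_seriesTerm_prime_pow_succ_le h1)
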